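/- arXiv:2312.17635 — 2 statements merged into one kernel-verified Lean document; each statement's English description precedes it below -/
import Mathlib

section
/- Let K ⊂ ℝⁿ be nonempty compact and t > 0. Then the open set U = K + B(0, t) is interior-ball regular with radius t: for every x ∈ ∂U there exists y ∈ U with ‖x − y‖ = t and B(y, t) ⊆ U. -/
open Metric Set Pointwise

theorem IsCompact.exists_dist_eq_of_mem_frontier_thickening {α : Type*} [PseudoMetricSpace α]
    {K : Set α} (hK : IsCompact K) {δ : ℝ} (hδ : 0 ≤ δ) {x : α}
    (hx : x ∈ frontier (thickening δ K)) : ∃ k ∈ K, dist x k = δ := by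
  have hinf : infEDist x K = ENNReal.ofReal δ := frontier_thickening_subset K hx
  have hne : K.Nonempty := nonempty_iff_ne_empty.2 fun h => by simp [h] at hinf
  obtain ⟨k, hk, hxk⟩ := hK.exists_infEDist_eq_edist hne x
  rw [hinf, edist_dist, ENNReal.ofReal_eq_ofReal_iff hδ dist_nonneg] at hxk
  exact ⟨k, hk, hxk.symm⟩

theorem stmt5_general (n : ℕ) (K : Set (EuclideanSpace ℝ (Fin n)))
    (hKc : IsCompact K) (t : ℝ) (ht : 0 < t) :
    ∀ x ∈ frontier (K + ball (0 : EuclideanSpace ℝ (Fin n)) t),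
      ∃ y ∈ K + ball (0 : EuclideanSpace ℝ (Fin n)) t,
        ‖x - y‖ = t ∧ ball y t ⊆ K + ball (0 : EuclideanSpace ℝ (Fin n)) t := by
  intro x hx
  rw [add_ball_zero] at hx ⊢
  obtain ⟨k, hk, hxk⟩ := hKc.exists_dist_eq_of_mem_frontier_thickening ht.le hx
  exact ⟨k, self_subset_thickening ht K hk, by rwa [← dist_eq_norm], ball_subset_thickening hk t⟩

theorem stmt5 (n : ℕ) (K : Set (EuclideanSpace ℝ (Fin n)))
    (hKne : K.Nonempty) (hKc : IsCompact K) (t : ℝ) (ht : 0 < t) :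
    ∀ x ∈ frontier (K + ball (0 : EuclideanSpace ℝ (Fin n)) t),
      ∃ y ∈ K + ball (0 : EuclideanSpace ℝ (Fin n)) t,
        ‖x - y‖ = t ∧ ball y t ⊆ K + ball (0 : EuclideanSpace ℝ (Fin n)) t :=
  stmt5_general n K hKc t ht
end

section
/- Let 0 < α_* ≤ α* and κ₀ ∈ (0,1], and set κ = α_* κ₀ / (2α* + α_*). Let U ⊂ ℝⁿ be open and bounded, K ⊂ U, x̄ ∈ K, x ∈ U. Suppose: (i) ρ : [0, L] → U is a unit-speed curve with ρ(0) = x, ρ(L) = x̄, and d(ρ(r), ∂U) ≥ (α_*/α*) r for all r ∈ [0, L]; (ii) ρ₀ : [0, L₀] → K is a unit-speed curve with ρ₀(0) = x̄, ρ₀(L₀) = x₀, and d(ρ₀(s), ∂K) ≥ κ₀ s for all s ∈ [0, L₀]; (iii) K ⊂ U so that d(y, ∂U) ≥ d(y, ∂K) for y ∈ K. Then the concatenated curve ρ̃ : [0, L + L₀] → U, equal to ρ(s) on [0, L] and ρ₀(s − L) on (L, L + L₀], satisfies d(ρ̃(s), ∂U) ≥ κ s for all s ∈ [0, L + L₀].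 -/
/-! The first leg inherits the bound `(α_*/α*) r ≥ κ r` directly. On the second leg, at time
`L + t`, the point `ρ₀ t` is at distance at least `κ₀ t` from `∂U` (through `∂K`) and, since it is
within `t` of `x̄ = ρ L`, at least `(α_*/α*) L - t`. The first bound dominates `κ (L + t)` once
`t ≥ (α_*/α*) L / 2`, the second one before that. -/

open Metric Set

theorem LipschitzOnWith.infDist_sub_le {E : Type*} [PseudoMetricSpace E] {f : ℝ → E} {K : NNReal}
    {s : Set ℝ} (hf : LipschitzOnWith K f s) (F : Set E) {a b : ℝ} (ha : a ∈ s) (hb : b ∈ s) :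
    infDist (f a) F - K * dist a b ≤ infDist (f b) F := by
  have := infDist_le_infDist_add_dist (s := F) (x := f a) (y := f b)
  linarith [hf.dist_le_mul a ha b hb]

theorem johnConst_le_div {αs αst κ₀ : ℝ} (hαs : 0 < αs) (hαst : 0 < αst) (hκ₀1 : κ₀ ≤ 1) :
    αs * κ₀ / (2 * αst + αs) ≤ αs / αst := by
  rw [div_le_div_iff₀ (by positivity) hαst]
  nlinarith [mul_pos hαs hαst]

theorem johnConst_mul_add_le_max {αs αst κ₀ L t : ℝ} (hαs : 0 < αs) (hαst : 0 < αst)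
    (hκ₀ : 0 ≤ κ₀) (hκ₀1 : κ₀ ≤ 1) (hL : 0 ≤ L) (ht : 0 ≤ t) :
    αs * κ₀ / (2 * αst + αs) * (L + t) ≤ max (κ₀ * t) (αs / αst * L - t) := by
  rcases le_total (αs * L) (2 * αst * t) with h | h
  · apply le_max_of_le_left
    rw [div_mul_eq_mul_div, div_le_iff₀ (by positivity)]
    nlinarith
  · apply le_max_of_le_right
    rw [div_mul_eq_mul_div, div_le_iff₀ (by positivity), div_mul_eq_mul_div, sub_mul,
      div_mul_eq_mul_div, le_sub_iff_add_le, le_div_iff₀ hαst]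
    nlinarith [mul_nonneg (add_pos hαs hαst).le (sub_nonneg.2 h),
      mul_nonneg (sub_nonneg.2 hκ₀1) (mul_nonneg (mul_pos hαst hαs).le (add_nonneg hL ht))]

theorem stmt10_general (n : ℕ) (αs αst : ℝ) (hαs : 0 < αs) (hαα : αs ≤ αst)
    (κ₀ : ℝ) (hκ₀ : 0 < κ₀) (hκ₀1 : κ₀ ≤ 1)
    (κ : ℝ) (hκ : κ = αs * κ₀ / (2 * αst + αs))
    (U K : Set (EuclideanSpace ℝ (Fin n)))
    (xb : EuclideanSpace ℝ (Fin n))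
    (L : ℝ) (hL : 0 ≤ L) (ρ : ℝ → EuclideanSpace ℝ (Fin n))
    (hρL : ρ L = xb)
    (hρdist : ∀ r ∈ Icc 0 L, (αs / αst) * r ≤ infDist (ρ r) (frontier U))
    (L₀ : ℝ) (ρ₀ : ℝ → EuclideanSpace ℝ (Fin n))
    (hlip₀ : LipschitzOnWith 1 ρ₀ (Icc 0 L₀))
    (hρ₀K : ∀ s ∈ Icc 0 L₀, ρ₀ s ∈ K)
    (hρ₀0 : ρ₀ 0 = xb)
    (hρ₀dist : ∀ s ∈ Icc 0 L₀, κ₀ * s ≤ infDist (ρ₀ s) (frontier K))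
    (hKfr : ∀ y ∈ K, infDist y (frontier K) ≤ infDist y (frontier U))
    (ρt : ℝ → EuclideanSpace ℝ (Fin n))
    (hρt : ∀ s, ρt s = if s ≤ L then ρ s else ρ₀ (s - L)) :
    ∀ s ∈ Icc 0 (L + L₀), κ * s ≤ infDist (ρt s) (frontier U) := by
  have hαst : 0 < αst := hαs.trans_le hαα
  intro s hs
  rw [hρt]
  split_ifs with hsL
  · calc κ * s ≤ αs / αst * s :=
          mul_le_mul_of_nonneg_right (hκ ▸ johnConst_le_div hαs hαst hκ₀1) hs.1
      _ ≤ infDist (ρ s) (frontier U) := hρdist s ⟨hs.1, hsL⟩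
  · obtain ⟨t, rfl⟩ : ∃ t, s = L + t := ⟨s - L, by ring⟩
    have ht : t ∈ Icc 0 L₀ := ⟨by linarith, by linarith [hs.2]⟩
    have hviaK : κ₀ * t ≤ infDist (ρ₀ t) (frontier U) :=
      (hρ₀dist t ht).trans (hKfr _ (hρ₀K t ht))
    have hviaStart : αs / αst * L - t ≤ infDist (ρ₀ t) (frontier U) := by
      have hxb := hρdist L ⟨hL, le_rfl⟩
      have hmove := hlip₀.infDist_sub_le (frontier U) ⟨le_rfl, ht.1.trans ht.2⟩ ht
      rw [hρL, ← hρ₀0] at hxb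
      rw [NNReal.coe_one, one_mul, dist_comm, dist_zero_right, Real.norm_of_nonneg ht.1] at hmove
      linarith
    rw [add_sub_cancel_left, hκ]
    exact (johnConst_mul_add_le_max hαs hαst hκ₀.le hκ₀1 hL ht.1).trans (max_le hviaK hviaStart)

theorem stmt10 (n : ℕ) (αs αst : ℝ) (hαs : 0 < αs) (hαα : αs ≤ αst)
    (κ₀ : ℝ) (hκ₀ : 0 < κ₀) (hκ₀1 : κ₀ ≤ 1)
    (κ : ℝ) (hκ : κ = αs * κ₀ / (2 * αst + αs))
    (U K : Set (EuclideanSpace ℝ (Fin n)))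
    (hUop : IsOpen U) (hUbd : Bornology.IsBounded U) (hKU : K ⊆ U)
    (xb x₀ x : EuclideanSpace ℝ (Fin n)) (hxb : xb ∈ K) (hx : x ∈ U)
    (L : ℝ) (hL : 0 ≤ L) (ρ : ℝ → EuclideanSpace ℝ (Fin n))
    (hlip : LipschitzOnWith 1 ρ (Icc 0 L))
    (hρU : ∀ r ∈ Icc 0 L, ρ r ∈ U)
    (hρ0 : ρ 0 = x) (hρL : ρ L = xb)
    (hρdist : ∀ r ∈ Icc 0 L, (αs / αst) * r ≤ infDist (ρ r) (frontier U))
    (L₀ : ℝ) (hL₀ : 0 ≤ L₀) (ρ₀ : ℝ → EuclideanSpace ℝ (Fin n))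
    (hlip₀ : LipschitzOnWith 1 ρ₀ (Icc 0 L₀))
    (hρ₀K : ∀ s ∈ Icc 0 L₀, ρ₀ s ∈ K)
    (hρ₀0 : ρ₀ 0 = xb) (hρ₀L : ρ₀ L₀ = x₀)
    (hρ₀dist : ∀ s ∈ Icc 0 L₀, κ₀ * s ≤ infDist (ρ₀ s) (frontier K))
    (hKfr : ∀ y ∈ K, infDist y (frontier K) ≤ infDist y (frontier U))
    (ρt : ℝ → EuclideanSpace ℝ (Fin n))
    (hρt : ∀ s, ρt s = if s ≤ L then ρ s else ρ₀ (s - L)) :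
    ∀ s ∈ Icc 0 (L + L₀), κ * s ≤ infDist (ρt s) (frontier U) :=
  stmt10_general n αs αst hαs hαα κ₀ hκ₀ hκ₀1 κ hκ U K xb L hL ρ hρL hρdist L₀ ρ₀ hlip₀ hρ₀K hρ₀0
    hρ₀dist hKfr ρt hρt
end
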